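/- arXiv:math/0407379 — 5 statements merged into one kernel-verified Lean document; each statement's English description precedes it below -/
import Mathlib

section
/- Let F be a nonconstant modular form of weight f ∈ ℤ for SL₂(ℤ). Then the function G : ℍ → ℂ defined by G(z) = f·F(z)·F''(z) − (f+1)·(F'(z))² is a modular form of weight 2f+4 for SL₂(ℤ); that is, G is holomorphic on ℍ, satisfies G((a·z+b)/(c·z+d)) = (c·z+d)^{2f+4}·G(z) for all z ∈ ℍ and all integers a, b, c, d with a·d − b·c = 1, and G is bounded on {z ∈ ℍ : Im(z) ≥ 1}. -/
open Complex Metric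


/-- A modular form of weight `k ∈ ℤ` for `SL₂(ℤ)`: a function `F` holomorphic on the upper
half-plane, satisfying the weight-`k` transformation law, and bounded on `{Im z ≥ 1}`. -/
def IsModularForm (k : ℤ) (F : ℂ → ℂ) : Prop :=
  (∀ z : ℂ, 0 < z.im → DifferentiableAt ℂ F z) ∧
  (∀ z : ℂ, 0 < z.im → ∀ a b c d : ℤ, a * d - b * c = 1 →
      F (((a : ℂ) * z + b) / ((c : ℂ) * z + d)) = ((c : ℂ) * z + d) ^ k * F z) ∧
  (∃ C : ℝ, ∀ z : ℂ, 1 ≤ z.im → ‖F z‖ ≤ C)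

lemma rct_denom_ne_zero {a b c d : ℤ} (h : a * d - b * c = 1) {z : ℂ} (hz : 0 < z.im) :
    (c : ℂ) * z + d ≠ 0 := by
  rcases eq_or_ne c 0 with hc | hc
  · subst hc
    have hd : d ≠ 0 := by rintro rfl; simp at h
    simp [Int.cast_ne_zero.mpr hd]
  · intro h0
    have him := congrArg Complex.im h0
    simp [Complex.add_im, Complex.mul_im] at him
    rcases him with h1 | h1
    · exact hc (by exact_mod_cast h1)
    · exact hz.ne' h1

lemma rct_im_transform {a b c d : ℤ} (h : a * d - b * c = 1) {z : ℂ} (hz : 0 < z.im) :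
    (((a : ℂ) * z + b) / ((c : ℂ) * z + d)).im
      = z.im / Complex.normSq ((c : ℂ) * z + d) := by
  have hne : (c : ℂ) * z + d ≠ 0 := rct_denom_ne_zero h hz
  have hns : Complex.normSq ((c : ℂ) * z + d) ≠ 0 := by
    simpa [Complex.normSq_eq_zero] using hne
  have hdet : (a : ℝ) * d - b * c = 1 := by exact_mod_cast h
  rw [Complex.div_im, div_sub_div_same]
  congr 1
  simp only [Complex.add_im, Complex.add_re, Complex.mul_im, Complex.mul_re,
    Complex.intCast_im, Complex.intCast_re]
  linear_combination z.im * hdet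

lemma rct_im_pos {a b c d : ℤ} (h : a * d - b * c = 1) {z : ℂ} (hz : 0 < z.im) :
    0 < (((a : ℂ) * z + b) / ((c : ℂ) * z + d)).im := by
  rw [rct_im_transform h hz]
  exact div_pos hz (Complex.normSq_pos.mpr (rct_denom_ne_zero h hz))

lemma rct_moebius_hasDerivAt {a b c d : ℤ} (h : a * d - b * c = 1) {z : ℂ} (hz : 0 < z.im) :
    HasDerivAt (fun w : ℂ => ((a : ℂ) * w + b) / ((c : ℂ) * w + d))
      (((c : ℂ) * z + d) ^ 2)⁻¹ z := by
  have hne : (c : ℂ) * z + d ≠ 0 := rct_denom_ne_zero h hz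
  have h1 : HasDerivAt (fun w : ℂ => (a : ℂ) * w + b) a z := by
    simpa using ((hasDerivAt_id z).const_mul (a : ℂ)).add_const (b : ℂ)
  have h2 : HasDerivAt (fun w : ℂ => (c : ℂ) * w + d) c z := by
    simpa using ((hasDerivAt_id z).const_mul (c : ℂ)).add_const (d : ℂ)
  have := h1.div h2 hne
  refine this.congr_deriv ?_
  have hdet : (a : ℂ) * d - b * c = 1 := by exact_mod_cast h
  symm
  rw [eq_div_iff (pow_ne_zero 2 hne), inv_mul_eq_div, div_eq_iff (pow_ne_zero 2 hne)]
  linear_combination (-((c:ℂ)*z+d)^2) * hdet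

lemma rct_deriv_transform (f : ℤ) (F : ℂ → ℂ)
    (hdiff : ∀ z : ℂ, 0 < z.im → DifferentiableAt ℂ F z)
    (htr : ∀ z : ℂ, 0 < z.im → ∀ a b c d : ℤ, a * d - b * c = 1 →
      F (((a : ℂ) * z + b) / ((c : ℂ) * z + d)) = ((c : ℂ) * z + d) ^ f * F z)
    {a b c d : ℤ} (h : a * d - b * c = 1) {z : ℂ} (hz : 0 < z.im) :
    deriv F (((a : ℂ) * z + b) / ((c : ℂ) * z + d))
      = (f : ℂ) * c * ((c : ℂ) * z + d) ^ (f + 1) * F z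
        + ((c : ℂ) * z + d) ^ (f + 2) * deriv F z := by
  have hne : (c : ℂ) * z + d ≠ 0 := rct_denom_ne_zero h hz
  have hU : IsOpen {w : ℂ | 0 < w.im} := isOpen_lt continuous_const Complex.continuous_im
  have heq : (fun w : ℂ => F (((a : ℂ) * w + b) / ((c : ℂ) * w + d)))
      =ᶠ[nhds z] (fun w : ℂ => ((c : ℂ) * w + d) ^ f * F w) :=
    Filter.eventuallyEq_of_mem (hU.mem_nhds hz) (fun w hw => htr w hw a b c d h)
  have hL : HasDerivAt (fun w : ℂ => F (((a : ℂ) * w + b) / ((c : ℂ) * w + d)))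
      (deriv F (((a : ℂ) * z + b) / ((c : ℂ) * z + d)) * (((c : ℂ) * z + d) ^ 2)⁻¹) z :=
    HasDerivAt.comp z (hdiff _ (rct_im_pos h hz)).hasDerivAt (rct_moebius_hasDerivAt h hz)
  have hJ : HasDerivAt (fun w : ℂ => (c : ℂ) * w + d) c z := by
    simpa using ((hasDerivAt_id z).const_mul (c : ℂ)).add_const (d : ℂ)
  have hzp : HasDerivAt (fun w : ℂ => ((c : ℂ) * w + d) ^ f)
      ((f : ℂ) * ((c : ℂ) * z + d) ^ (f - 1) * c) z :=
    HasDerivAt.comp z (hasDerivAt_zpow f _ (Or.inl hne)) hJ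
  have hR : HasDerivAt (fun w : ℂ => ((c : ℂ) * w + d) ^ f * F w)
      ((f : ℂ) * ((c : ℂ) * z + d) ^ (f - 1) * c * F z
        + ((c : ℂ) * z + d) ^ f * deriv F z) z :=
    hzp.mul (hdiff z hz).hasDerivAt
  have key : deriv F (((a : ℂ) * z + b) / ((c : ℂ) * z + d)) * (((c : ℂ) * z + d) ^ 2)⁻¹
      = (f : ℂ) * ((c : ℂ) * z + d) ^ (f - 1) * c * F z
        + ((c : ℂ) * z + d) ^ f * deriv F z := by
    rw [← hL.deriv, heq.deriv_eq, hR.deriv]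
  have e1 : ((c : ℂ) * z + d) ^ (f - 1) * ((c : ℂ) * z + d) ^ (2 : ℕ)
      = ((c : ℂ) * z + d) ^ (f + 1) := by
    rw [← zpow_natCast ((c : ℂ) * z + d) 2, ← zpow_add₀ hne]; congr 1; ring
  have e2 : ((c : ℂ) * z + d) ^ f * ((c : ℂ) * z + d) ^ (2 : ℕ)
      = ((c : ℂ) * z + d) ^ (f + 2) := by
    rw [← zpow_natCast ((c : ℂ) * z + d) 2, ← zpow_add₀ hne]; congr 1
  have hmul := congrArg (fun t => t * ((c : ℂ) * z + d) ^ (2 : ℕ)) key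
  simp only [mul_assoc, inv_mul_cancel₀ (pow_ne_zero 2 hne), mul_one] at hmul
  rw [hmul, ← e1, ← e2]
  ring

lemma rct_zpow_merge {u : ℂ} (hu : u ≠ 0) (m : ℤ) :
    u ^ m * u ^ (2 : ℕ) = u ^ (m + 2) := by
  rw [← zpow_natCast u 2, ← zpow_add₀ hu]; congr 1

lemma rct_deriv2_transform (f : ℤ) (F : ℂ → ℂ)
    (hdiff : ∀ z : ℂ, 0 < z.im → DifferentiableAt ℂ F z)
    (hdiff1 : ∀ z : ℂ, 0 < z.im → DifferentiableAt ℂ (deriv F) z)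
    (htr : ∀ z : ℂ, 0 < z.im → ∀ a b c d : ℤ, a * d - b * c = 1 →
      F (((a : ℂ) * z + b) / ((c : ℂ) * z + d)) = ((c : ℂ) * z + d) ^ f * F z)
    {a b c d : ℤ} (h : a * d - b * c = 1) {z : ℂ} (hz : 0 < z.im) :
    deriv (deriv F) (((a : ℂ) * z + b) / ((c : ℂ) * z + d))
      = (f : ℂ) * ((f : ℂ) + 1) * c ^ 2 * ((c : ℂ) * z + d) ^ (f + 2) * F z
        + (2 * (f : ℂ) + 2) * c * ((c : ℂ) * z + d) ^ (f + 3) * deriv F z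
        + ((c : ℂ) * z + d) ^ (f + 4) * deriv (deriv F) z := by
  have hne : (c : ℂ) * z + d ≠ 0 := rct_denom_ne_zero h hz
  have hU : IsOpen {w : ℂ | 0 < w.im} := isOpen_lt continuous_const Complex.continuous_im
  have heq : (fun w : ℂ => deriv F (((a : ℂ) * w + b) / ((c : ℂ) * w + d)))
      =ᶠ[nhds z] (fun w : ℂ => (f : ℂ) * c * ((c : ℂ) * w + d) ^ (f + 1) * F w
        + ((c : ℂ) * w + d) ^ (f + 2) * deriv F w) :=
    Filter.eventuallyEq_of_mem (hU.mem_nhds hz)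
      (fun w hw => rct_deriv_transform f F hdiff htr h hw)
  have hL : HasDerivAt (fun w : ℂ => deriv F (((a : ℂ) * w + b) / ((c : ℂ) * w + d)))
      (deriv (deriv F) (((a : ℂ) * z + b) / ((c : ℂ) * z + d)) * (((c : ℂ) * z + d) ^ 2)⁻¹) z :=
    by have := HasDerivAt.comp z (hdiff1 _ (rct_im_pos h hz)).hasDerivAt (rct_moebius_hasDerivAt h hz); exact this
  have hJ : HasDerivAt (fun w : ℂ => (c : ℂ) * w + d) c z := by
    simpa using ((hasDerivAt_id z).const_mul (c : ℂ)).add_const (d : ℂ)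
  have hz1 : HasDerivAt (fun w : ℂ => ((c : ℂ) * w + d) ^ (f + 1))
      (((f : ℂ) + 1) * ((c : ℂ) * z + d) ^ f * c) z := by
    have := HasDerivAt.comp z (hasDerivAt_zpow (f + 1) _ (Or.inl hne)) hJ
    refine this.congr_deriv ?_; push_cast; ring_nf
  have hz2 : HasDerivAt (fun w : ℂ => ((c : ℂ) * w + d) ^ (f + 2))
      (((f : ℂ) + 2) * ((c : ℂ) * z + d) ^ (f + 1) * c) z := by
    have := HasDerivAt.comp z (hasDerivAt_zpow (f + 2) _ (Or.inl hne)) hJ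
    refine this.congr_deriv ?_; push_cast; ring_nf
  have t1 : HasDerivAt (fun w : ℂ => (f : ℂ) * c * ((c : ℂ) * w + d) ^ (f + 1) * F w)
      (((f : ℂ) * c * (((f : ℂ) + 1) * ((c : ℂ) * z + d) ^ f * c)) * F z
        + ((f : ℂ) * c * ((c : ℂ) * z + d) ^ (f + 1)) * deriv F z) z :=
    (hz1.const_mul ((f : ℂ) * c)).mul (hdiff z hz).hasDerivAt
  have t2 : HasDerivAt (fun w : ℂ => ((c : ℂ) * w + d) ^ (f + 2) * deriv F w)
      ((((f : ℂ) + 2) * ((c : ℂ) * z + d) ^ (f + 1) * c) * deriv F z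
        + ((c : ℂ) * z + d) ^ (f + 2) * deriv (deriv F) z) z :=
    hz2.mul (hdiff1 z hz).hasDerivAt
  have hR := t1.add t2
  have key : deriv (deriv F) (((a : ℂ) * z + b) / ((c : ℂ) * z + d)) * (((c : ℂ) * z + d) ^ 2)⁻¹
      = ((f : ℂ) * c * (((f : ℂ) + 1) * ((c : ℂ) * z + d) ^ f * c)) * F z
        + ((f : ℂ) * c * ((c : ℂ) * z + d) ^ (f + 1)) * deriv F z
        + ((((f : ℂ) + 2) * ((c : ℂ) * z + d) ^ (f + 1) * c) * deriv F z
          + ((c : ℂ) * z + d) ^ (f + 2) * deriv (deriv F) z) := by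
    rw [← hL.deriv, heq.deriv_eq]; exact hR.deriv
  have hmul := congrArg (fun t => t * ((c : ℂ) * z + d) ^ (2 : ℕ)) key
  simp only [mul_assoc, inv_mul_cancel₀ (pow_ne_zero 2 hne), mul_one] at hmul
  have sk : ∀ k : ℕ, ((c : ℂ) * z + d) ^ (f + (k : ℤ)) = ((c : ℂ) * z + d) ^ f * ((c : ℂ) * z + d) ^ k :=
    fun k => by rw [← zpow_natCast ((c : ℂ) * z + d) k, ← zpow_add₀ hne]
  rw [hmul, show f + 1 = f + ((1 : ℕ) : ℤ) by norm_num,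
    show f + 2 = f + ((2 : ℕ) : ℤ) by norm_num,
    show f + 3 = f + ((3 : ℕ) : ℤ) by norm_num,
    show f + 4 = f + ((4 : ℕ) : ℤ) by norm_num, sk, sk, sk, sk]
  ring

/-- If `F` is a nonconstant modular form of weight `f`, then
`f·F·F'' − (f+1)·(F')²` is a modular form of weight `2f + 4`. -/
theorem rankin_cohen_two_is_modular (f : ℤ) (F : ℂ → ℂ)
    (hF : IsModularForm f F)
    (hnc : ¬ ∃ c : ℂ, ∀ z : ℂ, 0 < z.im → F z = c) :
    IsModularForm (2 * f + 4)
      (fun z => (f : ℂ) * F z * deriv (deriv F) z - ((f : ℂ) + 1) * (deriv F z) ^ 2) := by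
  obtain ⟨hdiff, htr, C, hC⟩ := hF
  have hUo : IsOpen {w : ℂ | 0 < w.im} := isOpen_lt continuous_const Complex.continuous_im
  have hdo : DifferentiableOn ℂ F {w : ℂ | 0 < w.im} :=
    fun z hz => (hdiff z hz).differentiableWithinAt
  have hA : AnalyticOnNhd ℂ F {w : ℂ | 0 < w.im} := hdo.analyticOnNhd hUo
  have hd1 : ∀ z : ℂ, 0 < z.im → DifferentiableAt ℂ (deriv F) z :=
    fun z hz => (hA.deriv z hz).differentiableAt
  have hd2 : ∀ z : ℂ, 0 < z.im → DifferentiableAt ℂ (deriv (deriv F)) z :=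
    fun z hz => (hA.deriv.deriv z hz).differentiableAt
  have hGdiff : ∀ z : ℂ, 0 < z.im → DifferentiableAt ℂ
      (fun z => (f : ℂ) * F z * deriv (deriv F) z - ((f : ℂ) + 1) * (deriv F z) ^ 2) z :=
    fun z hz =>
      (((differentiableAt_const _).mul (hdiff z hz)).mul (hd2 z hz)).sub
        ((differentiableAt_const _).mul ((hd1 z hz).pow 2))
  have hGtr : ∀ z : ℂ, 0 < z.im → ∀ a b c d : ℤ, a * d - b * c = 1 →
      (fun z => (f : ℂ) * F z * deriv (deriv F) z - ((f : ℂ) + 1) * (deriv F z) ^ 2)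
          (((a : ℂ) * z + b) / ((c : ℂ) * z + d))
        = ((c : ℂ) * z + d) ^ (2 * f + 4) *
          (fun z => (f : ℂ) * F z * deriv (deriv F) z - ((f : ℂ) + 1) * (deriv F z) ^ 2) z := by
    intro z hz a b c d h
    have hne : (c : ℂ) * z + d ≠ 0 := rct_denom_ne_zero h hz
    simp only
    rw [htr z hz a b c d h, rct_deriv_transform f F hdiff htr h hz,
      rct_deriv2_transform f F hdiff hd1 htr h hz]
    have sk : ∀ k : ℕ, ((c : ℂ) * z + d) ^ (f + (k : ℤ))
        = ((c : ℂ) * z + d) ^ f * ((c : ℂ) * z + d) ^ k :=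
      fun k => by rw [← zpow_natCast ((c : ℂ) * z + d) k, ← zpow_add₀ hne]
    have s2f : ((c : ℂ) * z + d) ^ (2 * f + 4)
        = ((c : ℂ) * z + d) ^ f * ((c : ℂ) * z + d) ^ f * ((c : ℂ) * z + d) ^ (4 : ℕ) := by
      rw [← zpow_natCast ((c : ℂ) * z + d) 4, ← zpow_add₀ hne, ← zpow_add₀ hne]
      congr 1; ring
    rw [show f + 1 = f + ((1 : ℕ) : ℤ) by norm_num,
      show f + 2 = f + ((2 : ℕ) : ℤ) by norm_num,
      show f + 3 = f + ((3 : ℕ) : ℤ) by norm_num,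
      show f + 4 = f + ((4 : ℕ) : ℤ) by norm_num, sk, sk, sk, sk, s2f]
    ring
  refine ⟨hGdiff, hGtr, ?_⟩
  set G : ℂ → ℂ := fun z => (f : ℂ) * F z * deriv (deriv F) z - ((f : ℂ) + 1) * (deriv F z) ^ 2
    with hGdef
  have hC0 : 0 ≤ C := le_trans (norm_nonneg _) (hC Complex.I (by simp))
  -- bound for deriv F on Im ≥ 3/2
  have hFd : ∀ z : ℂ, (3 / 2 : ℝ) ≤ z.im → ‖deriv F z‖ ≤ 2 * C := by
    intro z hz
    have hsub : ∀ w ∈ closedBall z (1 / 2 : ℝ), (1 : ℝ) ≤ w.im := by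
      intro w hw
      have h1 : |(w - z).im| ≤ ‖w - z‖ := Complex.abs_im_le_norm _
      have h2 : ‖w - z‖ ≤ 1 / 2 := by
        rwa [Metric.mem_closedBall, Complex.dist_eq] at hw
      have h3 := abs_le.mp (le_trans h1 h2)
      have h4 : -(1 / 2 : ℝ) ≤ w.im - z.im := by simpa [Complex.sub_im] using h3.1
      linarith
    have hdo2 : DifferentiableOn ℂ F (closedBall z (1 / 2)) :=
      fun w hw => (hdiff w (by linarith [hsub w hw])).differentiableWithinAt
    have hdc : DiffContOnCl ℂ F (ball z (1 / 2)) :=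
      (hdo2.mono closure_ball_subset_closedBall).diffContOnCl
    have hb := Complex.norm_deriv_le_of_forall_mem_sphere_norm_le
      (by norm_num : (0 : ℝ) < 1 / 2) hdc
      (fun w hw => by
        simpa using hC w (hsub w (sphere_subset_closedBall hw)))
    rw [show C / (1 / 2 : ℝ) = 2 * C by ring] at hb
    simpa using hb
  -- bound for deriv (deriv F) on Im ≥ 2
  have hFdd : ∀ z : ℂ, (2 : ℝ) ≤ z.im → ‖deriv (deriv F) z‖ ≤ 4 * C := by
    intro z hz
    have hsub : ∀ w ∈ closedBall z (1 / 2 : ℝ), (3 / 2 : ℝ) ≤ w.im := by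
      intro w hw
      have h1 : |(w - z).im| ≤ ‖w - z‖ := Complex.abs_im_le_norm _
      have h2 : ‖w - z‖ ≤ 1 / 2 := by
        rwa [Metric.mem_closedBall, Complex.dist_eq] at hw
      have h3 := abs_le.mp (le_trans h1 h2)
      have h4 : -(1 / 2 : ℝ) ≤ w.im - z.im := by simpa [Complex.sub_im] using h3.1
      linarith
    have hdo2 : DifferentiableOn ℂ (deriv F) (closedBall z (1 / 2)) :=
      fun w hw => (hd1 w (by linarith [hsub w hw])).differentiableWithinAt
    have hdc : DiffContOnCl ℂ (deriv F) (ball z (1 / 2)) :=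
      (hdo2.mono closure_ball_subset_closedBall).diffContOnCl
    have hb := Complex.norm_deriv_le_of_forall_mem_sphere_norm_le
      (by norm_num : (0 : ℝ) < 1 / 2) hdc
      (fun w hw => by
        simpa using hFd w (hsub w (sphere_subset_closedBall hw)))
    rw [show 2 * C / (1 / 2 : ℝ) = 4 * C by ring] at hb
    simpa using hb
  -- bound for G on Im ≥ 2
  set M2 : ℝ := ‖(f : ℂ)‖ * (C * (4 * C)) + ‖(f : ℂ) + 1‖ * (2 * C) ^ 2
    with hM2def
  have hGbd2 : ∀ z : ℂ, (2 : ℝ) ≤ z.im → ‖G z‖ ≤ M2 := by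
    intro z hz
    have h1 : ‖F z‖ ≤ C := hC z (by linarith)
    have h2 := hFd z (by linarith)
    have h3 := hFdd z hz
    have n1 : 0 ≤ ‖(f : ℂ)‖ := norm_nonneg _
    have n2 : 0 ≤ ‖(f : ℂ) + 1‖ := norm_nonneg _
    have n4 : 0 ≤ ‖deriv F z‖ := norm_nonneg _
    have n5 : 0 ≤ ‖deriv (deriv F) z‖ := norm_nonneg _
    have p1 : ‖F z‖ * ‖deriv (deriv F) z‖ ≤ C * (4 * C) :=
      mul_le_mul h1 h3 n5 hC0
    have p2 : ‖deriv F z‖ ^ 2 ≤ (2 * C) ^ 2 := by nlinarith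
    calc ‖G z‖
        ≤ ‖(f : ℂ) * F z * deriv (deriv F) z‖
          + ‖((f : ℂ) + 1) * (deriv F z) ^ 2‖ :=
          (by exact
            norm_sub_le ((f : ℂ) * F z * deriv (deriv F) z) (((f : ℂ) + 1) * (deriv F z) ^ 2) :
            ‖(f : ℂ) * F z * deriv (deriv F) z - ((f : ℂ) + 1) * (deriv F z) ^ 2‖
              ≤ _)
      _ ≤ M2 := by
          rw [hM2def, norm_mul, norm_mul, norm_mul, norm_pow]
          nlinarith [mul_le_mul_of_nonneg_left p1 n1, mul_le_mul_of_nonneg_left p2 n2]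
  -- compact fundamental strip
  have hK : IsCompact (Complex.equivRealProdCLM.toHomeomorph ⁻¹'
      (Set.Icc (0 : ℝ) 1 ×ˢ Set.Icc (1 : ℝ) 2)) :=
    Complex.equivRealProdCLM.toHomeomorph.isCompact_preimage.mpr (isCompact_Icc.prod isCompact_Icc)
  have hKU : (Complex.equivRealProdCLM.toHomeomorph ⁻¹'
      (Set.Icc (0 : ℝ) 1 ×ˢ Set.Icc (1 : ℝ) 2)) ⊆ {w : ℂ | 0 < w.im} := by
    intro w hw
    simp only [Set.mem_preimage, Set.mem_prod, Set.mem_Icc] at hw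
    have : (1 : ℝ) ≤ w.im := hw.2.1
    simpa using by linarith
  obtain ⟨M, hM⟩ := hK.exists_bound_of_continuousOn
    (fun w hw => (hGdiff w (hKU hw)).continuousAt.continuousWithinAt)
  have hstrip : ∀ z : ℂ, 1 ≤ z.im → z.im ≤ 2 → ‖G z‖ ≤ M := by
    intro z h1 h2
    set n : ℤ := ⌊z.re⌋ with hn
    have him : 0 < (z - (n : ℂ)).im := by
      simp only [Complex.sub_im, Complex.intCast_im, sub_zero]; linarith
    have hper := hGtr (z - (n : ℂ)) him 1 n 0 1 (by ring)
    rw [show ((1 : ℤ) : ℂ) * (z - (n : ℂ)) + ((n : ℤ) : ℂ) = z by push_cast; ring] at hper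
    rw [show ((0 : ℤ) : ℂ) * (z - (n : ℂ)) + ((1 : ℤ) : ℂ) = 1 by push_cast; ring] at hper
    rw [div_one, one_zpow, one_mul] at hper
    have hmem : z - (n : ℂ) ∈ Complex.equivRealProdCLM.toHomeomorph ⁻¹'
        (Set.Icc (0 : ℝ) 1 ×ˢ Set.Icc (1 : ℝ) 2) := by
      simp only [Set.mem_preimage, Set.mem_prod, Set.mem_Icc,
        ContinuousLinearEquiv.coe_toHomeomorph, Complex.equivRealProdCLM_apply,
        Complex.sub_re, Complex.sub_im, Complex.intCast_re, Complex.intCast_im]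
      refine ⟨⟨?_, ?_⟩, ?_, ?_⟩
      · linarith [Int.floor_le z.re]
      · linarith [Int.lt_floor_add_one z.re]
      · linarith
      · linarith
    have := hM _ hmem
    rw [← hper] at this
    simpa using this
  refine ⟨max M M2, fun z hz => ?_⟩
  by_cases h2 : z.im ≤ 2
  · exact le_trans (hstrip z hz h2) (le_max_left _ _)
  · exact le_trans (hGbd2 z (by linarith)) (le_max_right _ _)
end

section
/- Let f be a positive integer and let F be a modular form of weight f for SL₂(ℤ). Then, as functions on ℍ, [F, [F,F]₂]₂ = (6·f·(f+1)/((f+2)·(f+3)))·F·[F,F]₄, where [F,F]₂ is the second Rankin–Cohen bracket formed with the weight pair (f, f), the outer bracket [F, [F,F]₂]₂ is formed with the weight pair (f, 2f+4), and [F,F]₄ is the fourth Rankin–Cohen bracket formed with the weight pair (f, f). -/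
open scoped BigOperators

/-- The `n`-th Rankin–Cohen bracket of `F` and `G`, formed with the weight pair `(f, g)`
(normalizing factor `(2πi)^{-n}` omitted):
`[F,G]ₙ = ∑_{r=0}^{n} (−1)^r C(f+n−1, n−r) C(g+n−1, r) F^{(r)} G^{(n−r)}`. -/
noncomputable def RCBracket (f g : ℕ) (n : ℕ) (F G : ℂ → ℂ) : ℂ → ℂ :=
  fun z => ∑ r ∈ Finset.range (n + 1),
    (-1 : ℂ) ^ r * (Nat.choose (f + n - 1) (n - r) : ℂ) * (Nat.choose (g + n - 1) r : ℂ) *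
      iteratedDeriv r F z * iteratedDeriv (n - r) G z

set_option maxHeartbeats 1600000 in
/-- For a modular form `F` of positive integer weight `f`, the identity
`[F, [F,F]₂]₂ = (6f(f+1)/((f+2)(f+3)))·F·[F,F]₄` holds on the upper half-plane,
where `[F,F]₂` carries weights `(f,f)`, the outer bracket carries weights `(f, 2f+4)`,
and `[F,F]₄` carries weights `(f,f)`. -/
theorem rankin_cohen_iterated_identity (f : ℕ) (hf : 0 < f) (F : ℂ → ℂ)
    (hF : IsModularForm (f : ℤ) F) :
    ∀ z : ℂ, 0 < z.im →
      RCBracket f (2 * f + 4) 2 F (RCBracket f f 2 F F) z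
        = (6 * (f : ℂ) * ((f : ℂ) + 1)) / (((f : ℂ) + 2) * ((f : ℂ) + 3)) * F z *
            RCBracket f f 4 F F z := by
  obtain ⟨hdiff, -, -⟩ := hF
  set U : Set ℂ := {z | 0 < z.im} with hUdef
  have hU : IsOpen U := isOpen_lt continuous_const Complex.continuous_im
  have hDO : DifferentiableOn ℂ F U := fun z hz => (hdiff z hz).differentiableWithinAt
  have hFU : AnalyticOnNhd ℂ F U := hDO.analyticOnNhd hU
  have hAn : ∀ n : ℕ, AnalyticOnNhd ℂ (iteratedDeriv n F) U := by
    intro n; induction n with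
    | zero => simpa [iteratedDeriv_zero] using hFU
    | succ n ih => rw [iteratedDeriv_succ]; exact ih.deriv
  set D : ℕ → ℂ → ℂ := fun r => iteratedDeriv r F with hDdef
  have hD : ∀ (r : ℕ) (z : ℂ), z ∈ U → HasDerivAt (D r) (D (r+1) z) z := by
    intro r z hz
    have : D (r+1) z = deriv (D r) z := by rw [hDdef]; simp [iteratedDeriv_succ]
    rw [this]
    exact ((hAn r z hz).differentiableAt).hasDerivAt
  have mulD : ∀ (r s : ℕ) (z : ℂ), z ∈ U →
      HasDerivAt (fun w => D r w * D s w) (D (r+1) z * D s z + D r z * D (s+1) z) z :=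
    fun r s z hz => (hD r z hz).mul (hD s z hz)
  set G : ℂ → ℂ := RCBracket f f 2 F F with hGdef
  have e2 : f + 2 - 1 = f + 1 := by omega
  have e4 : f + 4 - 1 = f + 3 := by omega
  have e2' : 2 * f + 4 + 2 - 1 = 2 * f + 5 := by omega
  -- cast identities for binomial coefficients
  have hne2 : ((f:ℂ) + 2) ≠ 0 := by
    have : ((f:ℂ) + 2) = ((f + 2 : ℕ) : ℂ) := by push_cast; ring
    rw [this]; exact Nat.cast_ne_zero.mpr (by omega)
  have hne3 : ((f:ℂ) + 3) ≠ 0 := by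
    have : ((f:ℂ) + 3) = ((f + 3 : ℕ) : ℂ) := by push_cast; ring
    rw [this]; exact Nat.cast_ne_zero.mpr (by omega)
  have c2a : (((f+1).choose 2 : ℕ) : ℂ) = ((f:ℂ)+1) * f / 2 := by
    rw [Nat.cast_choose_two]; push_cast; ring
  have c2b : (((2*f+5).choose 2 : ℕ) : ℂ) = (2*(f:ℂ)+5) * (2*(f:ℂ)+4) / 2 := by
    rw [Nat.cast_choose_two]; push_cast; ring
  have c2c : (((f+3).choose 2 : ℕ) : ℂ) = ((f:ℂ)+3) * ((f:ℂ)+2) / 2 := by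
    rw [Nat.cast_choose_two]; push_cast; ring
  have c3 : (((f+3).choose 3 : ℕ) : ℂ) = ((f:ℂ)+3) * ((f:ℂ)+2) * ((f:ℂ)+1) / 6 := by
    have h := Nat.descFactorial_eq_factorial_mul_choose (f+3) 3
    rw [Nat.descFactorial_succ, Nat.descFactorial_succ, Nat.descFactorial_succ,
      Nat.descFactorial_zero, show f+3-2 = f+1 by omega, show f+3-1 = f+2 by omega,
      show f+3-0 = f+3 by omega, show Nat.factorial 3 = 6 from rfl] at h
    have h' : ((f:ℂ)+1) * (((f:ℂ)+2) * (((f:ℂ)+3) * 1)) = 6 * ((f+3).choose 3 : ℂ) := by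
      exact_mod_cast h
    field_simp
    linear_combination -h'
  have c4 : (((f+3).choose 4 : ℕ) : ℂ) = ((f:ℂ)+3) * ((f:ℂ)+2) * ((f:ℂ)+1) * f / 24 := by
    have h := Nat.descFactorial_eq_factorial_mul_choose (f+3) 4
    rw [Nat.descFactorial_succ, Nat.descFactorial_succ, Nat.descFactorial_succ,
      Nat.descFactorial_succ, Nat.descFactorial_zero, show f+3-3 = f by omega,
      show f+3-2 = f+1 by omega, show f+3-1 = f+2 by omega,
      show f+3-0 = f+3 by omega, show Nat.factorial 4 = 24 from rfl] at h
    have h' : (f:ℂ) * (((f:ℂ)+1) * (((f:ℂ)+2) * (((f:ℂ)+3) * 1))) = 24 * ((f+3).choose 4 : ℂ) := by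
      exact_mod_cast h
    field_simp
    linear_combination -h'
  -- explicit form of G
  have hGfun : G = fun w => (((f:ℂ)+1) * f / 2) * (D 0 w * D 2 w)
      - ((f:ℂ)+1)^2 * (D 1 w * D 1 w) + (((f:ℂ)+1) * f / 2) * (D 2 w * D 0 w) := by
    funext w
    rw [hGdef]
    simp only [RCBracket, e2, Finset.sum_range_succ, Finset.sum_range_zero, hDdef]
    norm_num [c2a, Nat.choose_one_right]
    push_cast
    ring
  set G1 : ℂ → ℂ := fun w => (((f:ℂ)+1) * f / 2) * (D 1 w * D 2 w + D 0 w * D 3 w)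
      - ((f:ℂ)+1)^2 * (D 2 w * D 1 w + D 1 w * D 2 w)
      + (((f:ℂ)+1) * f / 2) * (D 3 w * D 0 w + D 2 w * D 1 w) with hG1def
  set G2 : ℂ → ℂ := fun w => (((f:ℂ)+1) * f / 2) *
        ((D 2 w * D 2 w + D 1 w * D 3 w) + (D 1 w * D 3 w + D 0 w * D 4 w))
      - ((f:ℂ)+1)^2 * ((D 3 w * D 1 w + D 2 w * D 2 w) + (D 2 w * D 2 w + D 1 w * D 3 w))
      + (((f:ℂ)+1) * f / 2) *
        ((D 4 w * D 0 w + D 3 w * D 1 w) + (D 3 w * D 1 w + D 2 w * D 2 w)) with hG2def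
  have hHD1 : ∀ z ∈ U, HasDerivAt G (G1 z) z := by
    intro z hz
    rw [hGfun]
    exact (((mulD 0 2 z hz).const_mul _).sub ((mulD 1 1 z hz).const_mul _)).add
      ((mulD 2 0 z hz).const_mul _)
  have hHD2 : ∀ z ∈ U, HasDerivAt G1 (G2 z) z := by
    intro z hz
    rw [hG1def]
    exact ((((mulD 1 2 z hz).add (mulD 0 3 z hz)).const_mul _).sub
      (((mulD 2 1 z hz).add (mulD 1 2 z hz)).const_mul _)).add
      (((mulD 3 0 z hz).add (mulD 2 1 z hz)).const_mul _)
  have derivG : Set.EqOn (deriv G) G1 U := fun z hz => (hHD1 z hz).deriv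
  intro z hz
  have hzU : z ∈ U := hz
  have iter1 : iteratedDeriv 1 G z = G1 z := by
    rw [iteratedDeriv_one]; exact (hHD1 z hzU).deriv
  have iter2 : iteratedDeriv 2 G z = G2 z := by
    rw [show (2:ℕ) = 1 + 1 from rfl, iteratedDeriv_succ, iteratedDeriv_one]
    have hev : deriv G =ᶠ[nhds z] G1 := Filter.eventuallyEq_of_mem (hU.mem_nhds hzU) derivG
    rw [hev.deriv_eq]
    exact (hHD2 z hzU).deriv
  have iter0 : iteratedDeriv 0 G z = G z := by rw [iteratedDeriv_zero]
  have hFz : F z = D 0 z := by rw [hDdef]; simp [iteratedDeriv_zero]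
  -- expand both brackets
  rw [show RCBracket f (2*f+4) 2 F G z
      = (((f+1).choose 2 : ℕ) : ℂ) * D 0 z * iteratedDeriv 2 G z
        - ((f:ℂ)+1) * (((2*f+5).choose 1 : ℕ) : ℂ) * D 1 z * iteratedDeriv 1 G z
        + (((2*f+5).choose 2 : ℕ) : ℂ) * D 2 z * iteratedDeriv 0 G z by
    simp only [RCBracket, e2', e2, Finset.sum_range_succ, Finset.sum_range_zero, hDdef]
    norm_num [Nat.choose_one_right]
    push_cast
    ring]
  rw [show RCBracket f f 4 F F z
      = (((f+3).choose 4 : ℕ) : ℂ) * (D 0 z * D 4 z)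
        - (((f+3).choose 3 : ℕ) : ℂ) * (((f+3).choose 1 : ℕ) : ℂ) * (D 1 z * D 3 z)
        + (((f+3).choose 2 : ℕ) : ℂ)^2 * (D 2 z * D 2 z)
        - (((f+3).choose 1 : ℕ) : ℂ) * (((f+3).choose 3 : ℕ) : ℂ) * (D 3 z * D 1 z)
        + (((f+3).choose 4 : ℕ) : ℂ) * (D 4 z * D 0 z) by
    simp only [RCBracket, e4, Finset.sum_range_succ, Finset.sum_range_zero, hDdef]
    norm_num [Nat.choose_one_right]
    push_cast
    ring]
  rw [iter0, iter1, iter2, hGfun, hFz]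
  simp only [hG1def, hG2def, c2a, c2b, c2c, c3, c4, Nat.choose_one_right]
  push_cast
  field_simp
  ring
end

section
/- The group SL₂(𝓞_K), for K = ℚ(√5), is generated by the three matrices S = [[1,1],[0,1]], T = [[0,−1],[1,0]] and U = [[ε,0],[0,ε⁻¹]]: the subgroup of SL₂(𝓞_K) generated by {S, T, U} is the whole group. -/
noncomputable section

/-- The golden ratio `ε = (1 + √5)/2`, a fundamental unit of `ℚ(√5)`. -/
def eps : ℝ := (1 + Real.sqrt 5) / 2

/-- The ring of integers `𝓞_K = ℤ[ε]` of `K = ℚ(√5)`, as a subring of `ℝ`. -/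
def OK : Subalgebra ℤ ℝ := Algebra.adjoin ℤ {eps}

/-- `ε` as an element of `𝓞_K = ℤ[ε]`. -/
def epsOK : OK := ⟨eps, Algebra.subset_adjoin (Set.mem_singleton eps)⟩

lemma eps_mul_eps_sub_one : eps * (eps - 1) = 1 := by
  have h5 : Real.sqrt 5 * Real.sqrt 5 = 5 := Real.mul_self_sqrt (by norm_num)
  unfold eps
  nlinarith [h5]

/-- The matrix `S = [[1,1],[0,1]]` in `SL₂(𝓞_K)`. -/
def Smat : Matrix.SpecialLinearGroup (Fin 2) OK :=
  ⟨!![1, 1; 0, 1], by simp [Matrix.det_fin_two_of]⟩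

/-- The matrix `T = [[0,−1],[1,0]]` in `SL₂(𝓞_K)`. -/
def Tmat : Matrix.SpecialLinearGroup (Fin 2) OK :=
  ⟨!![0, -1; 1, 0], by simp [Matrix.det_fin_two_of]⟩

/-- The matrix `U = [[ε,0],[0,ε⁻¹]]` in `SL₂(𝓞_K)`, where `ε⁻¹ = ε − 1`. -/
def Umat : Matrix.SpecialLinearGroup (Fin 2) OK :=
  ⟨!![epsOK, 0; 0, epsOK - 1], by
    rw [Matrix.det_fin_two_of]
    apply Subtype.ext
    push_cast
    simpa [epsOK] using eps_mul_eps_sub_one⟩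

/-! ### Auxiliary material: integer arithmetic of the norm form of `ℤ[ε]` -/

/-- The norm form of `ℤ[ε]` in the basis `(1, ε)`: `N(m + nε) = m² + mn - n²`. -/
def nsq (m n : ℤ) : ℤ := m^2 + m*n - n^2

lemma nsq_mul (x y u v : ℤ) :
    nsq (x*u + y*v) (x*v + y*u + y*v) = nsq x y * nsq u v := by
  unfold nsq; ring

lemma nsq_ne_zero {m n : ℤ} (h : ¬ (m = 0 ∧ n = 0)) : nsq m n ≠ 0 := by
  intro h0
  have hn : n ≠ 0 := by
    rintro rfl
    unfold nsq at h0
    have : m = 0 := by nlinarith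
    exact h ⟨this, rfl⟩
  have key : ((2*m+n : ℤ) : ℝ)^2 = 5 * ((n:ℤ):ℝ)^2 := by
    have : (2*m+n)^2 = 5*n^2 := by unfold nsq at h0; nlinarith
    exact_mod_cast congrArg (fun z : ℤ => (z:ℝ)) this
  have hirr : Irrational (Real.sqrt 5) := by
    have := (by norm_num : Nat.Prime 5).irrational_sqrt
    simpa using this
  apply hirr
  refine ⟨|(2*m+n : ℚ)/(n:ℚ)|, ?_⟩
  have hnR : ((n:ℤ):ℝ) ≠ 0 := Int.cast_ne_zero.mpr hn
  have : Real.sqrt 5 = |((2*m+n:ℤ):ℝ)/((n:ℤ):ℝ)| := by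
    rw [show (5:ℝ) = (((2*m+n:ℤ):ℝ)/((n:ℤ):ℝ))^2 by
      field_simp; push_cast at key ⊢; linarith [key]]
    exact Real.sqrt_sq_eq_abs _
  rw [this]
  push_cast
  ring_nf

lemma round_div (P D : ℤ) (hD : D ≠ 0) : ∃ q : ℤ, 2 * |P - q * D| ≤ |D| := by
  set e := |D| with he
  have he0 : 0 < e := abs_pos.mpr hD
  have hr0 : 0 ≤ P % e := Int.emod_nonneg P (ne_of_gt he0)
  have hre : P % e < e := Int.emod_lt_of_pos P he0
  have hPe : e * (P / e) + P % e = P := Int.mul_ediv_add_emod P e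
  have main : ∃ q' : ℤ, 2 * |P - q' * e| ≤ e := by
    rcases le_or_gt (2 * (P % e)) e with h | h
    · exact ⟨P / e, by rw [show P - P / e * e = P % e by linarith]; rwa [abs_of_nonneg hr0]⟩
    · refine ⟨P / e + 1, ?_⟩
      have : P - (P / e + 1) * e = P % e - e := by ring_nf; linarith
      rw [this, abs_of_nonpos (by linarith)]
      linarith
  obtain ⟨q', hq'⟩ := main
  rw [he] at hq'
  rcases le_or_gt 0 D with h | h
  · rw [abs_of_nonneg h] at hq'
    exact ⟨q', by rw [he, abs_of_nonneg h]; exact hq'⟩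
  · rw [abs_of_neg h] at hq'
    refine ⟨-q', ?_⟩
    rw [he, abs_of_neg h]
    rw [show P - q' * -D = P - -q' * D by ring] at hq'
    exact hq'

/-- Euclidean division step for `ℤ[ε]` w.r.t. the absolute norm. -/
lemma euclid_step (M N m n : ℤ) (hD : nsq m n ≠ 0) :
    ∃ q₁ q₂ : ℤ,
      (nsq (M - q₁*m - q₂*n) (N - q₁*n - q₂*m - q₂*n)).natAbs < (nsq m n).natAbs := by
  set D := nsq m n with hDdef
  obtain ⟨q₁, h1⟩ := round_div (M*(m+n) - N*n) D hD
  obtain ⟨q₂, h2⟩ := round_div (N*m - M*n) D hD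
  refine ⟨q₁, q₂, ?_⟩
  set x := M - q₁*m - q₂*n with hx
  set y := N - q₁*n - q₂*m - q₂*n with hy
  set r := M*(m+n) - N*n - q₁ * D with hr
  set s := N*m - M*n - q₂ * D with hs
  have key : nsq x y * D = nsq r s := by
    have h := nsq_mul x y (m+n) (-n)
    have e1 : x*(m+n) + y*(-n) = r := by
      rw [hx, hy, hr, hDdef]; unfold nsq; ring
    have e2 : x*(-n) + y*(m+n) + y*(-n) = s := by
      rw [hx, hy, hs, hDdef]; unfold nsq; ring
    have e3 : nsq (m+n) (-n) = D := by rw [hDdef]; unfold nsq; ring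
    rw [e1, e2, e3] at h
    exact h.symm
  have h1' : 2 * |r| ≤ |D| := h1
  have h2' : 2 * |s| ≤ |D| := h2
  have habs : |nsq r s| * 4 ≤ 3 * (|D| * |D|) := by
    have hrs : |r * s| = |r| * |s| := abs_mul r s
    have b1 : |nsq r s| ≤ |r| * |r| + |r| * |s| + |s| * |s| := by
      unfold nsq
      calc |r^2 + r*s - s^2| ≤ |r^2 + r*s| + |s^2| := abs_sub _ _
        _ ≤ |r^2| + |r*s| + |s^2| := by linarith [abs_add_le (r^2) (r*s)]
        _ = |r| * |r| + |r| * |s| + |s| * |s| := by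
            rw [hrs, abs_pow, abs_pow]; ring
    nlinarith [abs_nonneg r, abs_nonneg s, abs_nonneg D]
  have hlt : |nsq x y| < |D| := by
    have hD0 : 0 < |D| := abs_pos.mpr hD
    have : |nsq x y| * |D| = |nsq r s| := by rw [← abs_mul, key]
    nlinarith
  have := Int.natAbs_lt_natAbs_of_nonneg_of_lt (abs_nonneg (nsq x y)) hlt
  simpa [Int.natAbs_abs] using this

/-! ### Auxiliary material: the ring `𝓞_K` -/

lemma eps_sq : eps * eps = eps + 1 := by nlinarith [eps_mul_eps_sub_one]

lemma epsOK_key : epsOK * (epsOK - 1) = 1 := by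
  apply Subtype.ext; push_cast; exact eps_mul_eps_sub_one

lemma epsR : (epsOK : ℝ) * ((epsOK : ℝ) - 1) = 1 := eps_mul_eps_sub_one

/-- `m + n ε` as an element of `𝓞_K`. -/
def iota (m n : ℤ) : OK := (m : OK) + (n : OK) * epsOK

lemma iota_coe (m n : ℤ) : ((iota m n : OK) : ℝ) = m + n * eps := by
  unfold iota epsOK; push_cast; ring

lemma rep_exists (x : OK) : ∃ m n : ℤ, x = iota m n := by
  have hx : (x : ℝ) ∈ Algebra.adjoin ℤ {eps} := x.2
  have main : ∀ (z : ℝ), z ∈ Algebra.adjoin ℤ {eps} → ∃ m n : ℤ, z = m + n * eps := by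
    intro z hz
    induction hz using Algebra.adjoin_induction with
    | mem w hw => exact ⟨0, 1, by simp [Set.eq_of_mem_singleton hw]⟩
    | algebraMap r => exact ⟨r, 0, by simp [algebraMap_int_eq]⟩
    | add a b ha hb iha ihb =>
        obtain ⟨m1, n1, h1⟩ := iha
        obtain ⟨m2, n2, h2⟩ := ihb
        exact ⟨m1 + m2, n1 + n2, by rw [h1, h2]; push_cast; ring⟩
    | mul a b ha hb iha ihb =>
        obtain ⟨m1, n1, h1⟩ := iha
        obtain ⟨m2, n2, h2⟩ := ihb
        refine ⟨m1*m2 + n1*n2, m1*n2 + n1*m2 + n1*n2, ?_⟩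
        rw [h1, h2]
        push_cast
        linear_combination ((n1 : ℝ) * (n2 : ℝ)) * eps_sq
  obtain ⟨m, n, h⟩ := main x hx
  exact ⟨m, n, Subtype.ext (by rw [iota_coe]; exact h)⟩

lemma iota_arith (M N q₁ q₂ m n : ℤ) :
    iota M N - iota q₁ q₂ * iota m n
      = iota (M - q₁*m - q₂*n) (N - q₁*n - q₂*m - q₂*n) := by
  apply Subtype.ext
  push_cast [iota_coe]
  linear_combination (-(q₂:ℝ) * (n:ℝ)) * eps_sq

lemma iota_zero : iota 0 0 = 0 := by
  apply Subtype.ext; rw [iota_coe]; push_cast; ring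

/-! ### Auxiliary material: subgroup generated by `S`, `T`, `U` -/

abbrev SL2O := Matrix.SpecialLinearGroup (Fin 2) OK

def Hgp : Subgroup SL2O := Subgroup.closure ({Smat, Tmat, Umat} : Set SL2O)

lemma S_mem : Smat ∈ Hgp := Subgroup.subset_closure (by simp)
lemma T_mem : Tmat ∈ Hgp := Subgroup.subset_closure (by simp)
lemma U_mem : Umat ∈ Hgp := Subgroup.subset_closure (by simp)

def Emat (x : OK) : SL2O := ⟨!![1, x; 0, 1], by simp [Matrix.det_fin_two_of]⟩
def Fmat (x : OK) : SL2O := ⟨!![1, 0; x, 1], by simp [Matrix.det_fin_two_of]⟩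

lemma E_mul (x y : OK) : Emat x * Emat y = Emat (x + y) := by
  apply Subtype.ext
  rw [Matrix.SpecialLinearGroup.coe_mul]
  show (!![1, x; 0, 1] : Matrix (Fin 2) (Fin 2) OK) * !![1, y; 0, 1] = !![1, x + y; 0, 1]
  rw [Matrix.mul_fin_two]
  ext i j : 2
  fin_cases i <;> fin_cases j <;> simp <;> ring

lemma E_zero : Emat 0 = 1 := by
  apply Subtype.ext
  show (!![1, 0; 0, 1] : Matrix (Fin 2) (Fin 2) OK) = 1
  ext i j : 2
  fin_cases i <;> fin_cases j <;> simp [Matrix.one_fin_two]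

lemma E_one_eq_S : Emat 1 = Smat := rfl

def Vmat : SL2O := ⟨!![epsOK - 1, 0; 0, epsOK], by
  rw [Matrix.det_fin_two_of]
  linear_combination epsOK_key⟩

lemma UV : Umat * Vmat = 1 := by
  apply Subtype.ext
  rw [Matrix.SpecialLinearGroup.coe_mul]
  show (!![epsOK, 0; 0, epsOK - 1] : Matrix (Fin 2) (Fin 2) OK) * !![epsOK - 1, 0; 0, epsOK] = 1
  rw [Matrix.mul_fin_two]
  ext i j : 2
  fin_cases i <;> fin_cases j <;> simp [Matrix.one_fin_two] <;> linear_combination epsR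

lemma V_mem : Vmat ∈ Hgp := by
  have : Vmat = Umat⁻¹ := eq_inv_of_mul_eq_one_left (by
    have h := UV
    have hcomm : Umat * Vmat = Vmat * Umat := by
      apply Subtype.ext
      rw [Matrix.SpecialLinearGroup.coe_mul, Matrix.SpecialLinearGroup.coe_mul]
      show (!![epsOK, 0; 0, epsOK - 1] : Matrix (Fin 2) (Fin 2) OK) * !![epsOK - 1, 0; 0, epsOK]
          = !![epsOK - 1, 0; 0, epsOK] * !![epsOK, 0; 0, epsOK - 1]
      rw [Matrix.mul_fin_two, Matrix.mul_fin_two]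
      ext i j : 2
      fin_cases i <;> fin_cases j <;> simp <;> ring
    rw [← hcomm]; exact h)
  rw [this]; exact inv_mem U_mem

lemma USV : Umat * Smat * Vmat = Emat (epsOK * epsOK) := by
  apply Subtype.ext
  rw [Matrix.SpecialLinearGroup.coe_mul, Matrix.SpecialLinearGroup.coe_mul]
  show (!![epsOK, 0; 0, epsOK - 1] : Matrix (Fin 2) (Fin 2) OK) * !![1, 1; 0, 1]
      * !![epsOK - 1, 0; 0, epsOK] = !![1, epsOK * epsOK; 0, 1]
  rw [Matrix.mul_fin_two, Matrix.mul_fin_two]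
  ext i j : 2
  fin_cases i <;> fin_cases j <;> simp <;> linear_combination epsR

/-- The set of `x` with `Emat x ∈ Hgp`, as an additive subgroup. -/
def Gadd : AddSubgroup OK where
  carrier := {x | Emat x ∈ Hgp}
  zero_mem' := by simp only [Set.mem_setOf_eq, E_zero]; exact one_mem _
  add_mem' := by
    intro a b ha hb
    simp only [Set.mem_setOf_eq] at *
    rw [← E_mul]; exact mul_mem ha hb
  neg_mem' := by
    intro a ha
    simp only [Set.mem_setOf_eq] at *
    have : Emat (-a) = (Emat a)⁻¹ := eq_inv_of_mul_eq_one_left (by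
      rw [E_mul]; simpa using E_zero)
    rw [this]; exact inv_mem ha

lemma E_mem (x : OK) : Emat x ∈ Hgp := by
  have h1 : (1 : OK) ∈ Gadd := by
    show Emat 1 ∈ Hgp; rw [E_one_eq_S]; exact S_mem
  have h2 : epsOK * epsOK ∈ Gadd := by
    show Emat (epsOK * epsOK) ∈ Hgp
    rw [← USV]; exact mul_mem (mul_mem U_mem S_mem) V_mem
  have heps : epsOK ∈ Gadd := by
    have hsub := Gadd.sub_mem h2 h1
    have key : epsOK * epsOK - 1 = epsOK := by
      linear_combination epsOK_key
    rwa [key] at hsub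
  obtain ⟨m, n, rfl⟩ : ∃ m n : ℤ, x = iota m n := rep_exists x
  have hm : ((m : OK)) ∈ Gadd := by
    have := Gadd.zsmul_mem h1 m
    rwa [zsmul_eq_mul, mul_one] at this
  have hn : ((n : OK)) * epsOK ∈ Gadd := by
    have := Gadd.zsmul_mem heps n
    rwa [zsmul_eq_mul] at this
  exact Gadd.add_mem hm hn

def Wmat : SL2O := ⟨!![0, 1; -1, 0], by simp [Matrix.det_fin_two_of]⟩

lemma TW : Tmat * Wmat = 1 := by
  apply Subtype.ext
  rw [Matrix.SpecialLinearGroup.coe_mul]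
  show (!![0, -1; 1, 0] : Matrix (Fin 2) (Fin 2) OK) * !![0, 1; -1, 0] = 1
  rw [Matrix.mul_fin_two]
  ext i j : 2
  fin_cases i <;> fin_cases j <;> simp [Matrix.one_fin_two]

lemma W_eq : Wmat = Tmat⁻¹ := eq_inv_of_mul_eq_one_right TW

lemma F_eq (x : OK) : Fmat x = Tmat * Emat (-x) * Wmat := by
  apply Subtype.ext
  rw [Matrix.SpecialLinearGroup.coe_mul, Matrix.SpecialLinearGroup.coe_mul]
  show (!![1, 0; x, 1] : Matrix (Fin 2) (Fin 2) OK)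
      = !![0, -1; 1, 0] * !![1, -x; 0, 1] * !![0, 1; -1, 0]
  rw [Matrix.mul_fin_two, Matrix.mul_fin_two]
  ext i j : 2
  fin_cases i <;> fin_cases j <;> simp <;> ring

lemma F_mem (x : OK) : Fmat x ∈ Hgp := by
  rw [F_eq]
  exact mul_mem (mul_mem T_mem (E_mem (-x))) (W_eq ▸ inv_mem T_mem)

/-- The triangular-matrix identity used in the base case. -/
lemma diag_identity (a b d : OK) (h : a * d = 1) :
    (!![a, b; 0, d] : Matrix (Fin 2) (Fin 2) OK)
      = !![1,a;0,1] * !![1,0;-d,1] * !![1,a;0,1] * !![0,-1;1,0] * !![1, d*b; 0, 1] := by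
  rw [Matrix.mul_fin_two, Matrix.mul_fin_two, Matrix.mul_fin_two, Matrix.mul_fin_two]
  apply Matrix.ext
  intro i j
  fin_cases i <;> fin_cases j <;>
    simp only [Matrix.cons_val', Matrix.cons_val_zero, Matrix.cons_val_one, Matrix.head_cons,
      Matrix.head_fin_const, Matrix.empty_val', Matrix.cons_val_fin_one, Matrix.of_apply,
      Fin.zero_eta, Fin.mk_one]
  · linear_combination a * h
  · linear_combination (a*d*b - b - 1) * h
  · linear_combination h
  · linear_combination (d*b) * h

/-- The row-reduction identity used in the inductive step. -/
lemma step_identity (a b c d q : OK) :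
    (!![0,-1;1,0] : Matrix (Fin 2) (Fin 2) OK) * (!![1,-q;0,1] * !![a,b;c,d])
      = !![-c, -d; a - q*c, b - q*d] := by
  rw [Matrix.mul_fin_two, Matrix.mul_fin_two]
  ext i j : 2
  fin_cases i <;> fin_cases j <;> simp <;> ring

/-- Main induction: any `A ∈ SL₂(𝓞_K)` whose lower-left entry is `m + nε` with
`|N(m+nε)| ≤ k` lies in the subgroup generated by `S`, `T`, `U`. -/
lemma mem_aux : ∀ (k : ℕ) (A : SL2O) (m n : ℤ),
    (A : Matrix (Fin 2) (Fin 2) OK) 1 0 = iota m n → (nsq m n).natAbs ≤ k → A ∈ Hgp := by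
  intro k
  induction k using Nat.strong_induction_on with
  | _ k ih =>
  intro A m n hrep hk
  by_cases hc : (A : Matrix (Fin 2) (Fin 2) OK) 1 0 = 0
  · -- upper triangular case
    have hdet : Matrix.det (A : Matrix (Fin 2) (Fin 2) OK) = 1 := A.2
    rw [Matrix.det_fin_two, hc] at hdet
    have hud : (A : Matrix (Fin 2) (Fin 2) OK) 0 0 * (A : Matrix (Fin 2) (Fin 2) OK) 1 1 = 1 := by
      linear_combination hdet
    set a := (A : Matrix (Fin 2) (Fin 2) OK) 0 0 with ha
    set b := (A : Matrix (Fin 2) (Fin 2) OK) 0 1 with hb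
    set d := (A : Matrix (Fin 2) (Fin 2) OK) 1 1 with hd
    have hAeq : A = Emat a * Fmat (-d) * Emat a * Tmat * Emat (d*b) := by
      apply Subtype.ext
      rw [Matrix.SpecialLinearGroup.coe_mul, Matrix.SpecialLinearGroup.coe_mul,
        Matrix.SpecialLinearGroup.coe_mul, Matrix.SpecialLinearGroup.coe_mul]
      have hA : (A : Matrix (Fin 2) (Fin 2) OK) = !![a, b; 0, d] := by
        rw [Matrix.eta_fin_two (A : Matrix (Fin 2) (Fin 2) OK), hc]
      rw [hA]
      exact diag_identity a b d hud
    rw [hAeq]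
    exact mul_mem (mul_mem (mul_mem (mul_mem (E_mem a) (F_mem (-d))) (E_mem a)) T_mem)
      (E_mem (d*b))
  · -- Euclidean reduction step
    have hmn : ¬ (m = 0 ∧ n = 0) := by
      rintro ⟨rfl, rfl⟩
      exact hc (by rw [hrep, iota_zero])
    have hD := nsq_ne_zero hmn
    obtain ⟨M, N, hMN⟩ := rep_exists ((A : Matrix (Fin 2) (Fin 2) OK) 0 0)
    obtain ⟨q₁, q₂, hlt⟩ := euclid_step M N m n hD
    set q := iota q₁ q₂ with hq
    set B := Tmat * (Emat (-q) * A) with hBdef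
    have hBcoe : (B : Matrix (Fin 2) (Fin 2) OK)
        = !![-((A : Matrix (Fin 2) (Fin 2) OK) 1 0), -((A : Matrix (Fin 2) (Fin 2) OK) 1 1);
            (A : Matrix (Fin 2) (Fin 2) OK) 0 0 - q * (A : Matrix (Fin 2) (Fin 2) OK) 1 0,
            (A : Matrix (Fin 2) (Fin 2) OK) 0 1 - q * (A : Matrix (Fin 2) (Fin 2) OK) 1 1] := by
      rw [hBdef, Matrix.SpecialLinearGroup.coe_mul, Matrix.SpecialLinearGroup.coe_mul]
      have := step_identity ((A : Matrix (Fin 2) (Fin 2) OK) 0 0)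
        ((A : Matrix (Fin 2) (Fin 2) OK) 0 1) ((A : Matrix (Fin 2) (Fin 2) OK) 1 0)
        ((A : Matrix (Fin 2) (Fin 2) OK) 1 1) q
      rw [← Matrix.eta_fin_two (A : Matrix (Fin 2) (Fin 2) OK)] at this
      exact this
    have hB10 : (B : Matrix (Fin 2) (Fin 2) OK) 1 0
        = iota (M - q₁*m - q₂*n) (N - q₁*n - q₂*m - q₂*n) := by
      rw [hBcoe]
      show (A : Matrix (Fin 2) (Fin 2) OK) 0 0 - q * (A : Matrix (Fin 2) (Fin 2) OK) 1 0 = _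
      rw [hMN, hrep, hq]
      exact iota_arith M N q₁ q₂ m n
    have hBmem : B ∈ Hgp :=
      ih _ (lt_of_lt_of_le hlt hk) B _ _ hB10 le_rfl
    have hA : A = Emat q * (Tmat⁻¹ * B) := by
      rw [hBdef, inv_mul_cancel_left, ← mul_assoc, E_mul]
      rw [show q + -q = 0 by ring, E_zero, one_mul]
    rw [hA]
    exact mul_mem (E_mem q) (mul_mem (inv_mem T_mem) hBmem)

/-- Götzky's theorem: `SL₂(𝓞_K)` for `K = ℚ(√5)` is generated by the three matrices
`S`, `T` and `U`. -/
theorem SL2_O_sqrt5_generated_by_S_T_U :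
    Subgroup.closure ({Smat, Tmat, Umat} :
        Set (Matrix.SpecialLinearGroup (Fin 2) OK)) = ⊤ := by
  refine (Subgroup.eq_top_iff' _).mpr fun A => ?_
  obtain ⟨m, n, h⟩ := rep_exists ((A : Matrix (Fin 2) (Fin 2) OK) 1 0)
  exact mem_aux ((nsq m n).natAbs) A m n h le_rfl

end
end

section
/- Let K be a totally real number field of degree n ≥ 2 over ℚ, and let σ₁, …, σₙ : K → ℝ be its n distinct real embeddings. Then the image of the ring of integers 𝓞_K under the map x ↦ (σ₂(x), …, σₙ(x)) is dense in ℝ^{n−1}. -/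
/-!
The image of `𝓞 K` under any family of distinct real embeddings is coarsely dense, being a
projection of the lattice `𝓞 K ⊂ ℝ^r₁ × ℂ^r₂`. Dirichlet's unit theorem gives a unit `u` with
`|σ u| < 1` at every real embedding `σ` except one chosen `τ`. Approximating `u⁻ᵏ x` within a
fixed distance and multiplying back by `uᵏ` approximates `x` arbitrarily well away from `τ`.
-/

open NumberField NumberField.InfinitePlace NumberField.mixedEmbedding Function Set Filter Topology

theorem ZSpan.exists_dist_le {ι E : Type*} [Fintype ι] [NormedAddCommGroup E] [NormedSpace ℝ E]
    (b : Module.Basis ι ℝ E) (x : E) :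
    ∃ z ∈ Submodule.span ℤ (range b), dist z x ≤ ∑ i, ‖b i‖ :=
  ⟨floor b x, (floor b x).2, by
    rw [dist_comm, dist_eq_norm, ← fract_apply]; exact norm_fract_le b x⟩

theorem dense_of_forall_exists_dist_le_of_units_mul_mem {A : Type*} [NormedRing A] {S : Set A}
    {R : ℝ} (hS : ∀ x, ∃ s ∈ S, dist s x ≤ R) (u : Aˣ) (hu : ‖(u : A)‖ < 1)
    (hmul : ∀ s ∈ S, (u : A) * s ∈ S) : Dense S := by
  have hpow : ∀ k : ℕ, ∀ s ∈ S, ((u ^ k : Aˣ) : A) * s ∈ S := by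
    intro k
    induction k with
    | zero => simp
    | succ k ih => intro s hs; simpa [pow_succ', mul_assoc] using hmul _ (ih s hs)
  have hsmall : Tendsto (fun k : ℕ => ‖(u : A)‖ ^ k * R) atTop (𝓝 0) := by
    simpa using (tendsto_pow_atTop_nhds_zero_of_lt_one (norm_nonneg _) hu).mul_const R
  refine Metric.dense_iff.mpr fun x ε hε => ?_
  obtain ⟨k, hkε, hk⟩ :=
    ((hsmall.eventually (gt_mem_nhds hε)).and (eventually_ge_atTop 1)).exists
  obtain ⟨s, hs, hsx⟩ := hS (((u ^ k)⁻¹ : Aˣ) * x)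
  refine ⟨((u ^ k : Aˣ) : A) * s, ?_, hpow k s hs⟩
  rw [Metric.mem_ball, dist_eq_norm]
  calc ‖((u ^ k : Aˣ) : A) * s - x‖
      = ‖((u ^ k : Aˣ) : A) * (s - ((u ^ k)⁻¹ : Aˣ) * x)‖ := by
        rw [mul_sub, Units.mul_inv_cancel_left]
    _ ≤ ‖(u : A)‖ ^ k * R := by
        rw [Units.val_pow_eq_pow_val]
        refine (norm_mul_le _ _).trans (mul_le_mul (norm_pow_le' _ hk) ?_ (norm_nonneg _)
          (pow_nonneg (norm_nonneg _) k))
        rwa [← dist_eq_norm]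
    _ < ε := hkε

namespace NumberField

variable {K : Type*} [Field K]

theorem ComplexEmbedding.isReal_ofRealHom_comp (σ : K →+* ℝ) :
    ComplexEmbedding.IsReal (Complex.ofRealHom.comp σ) :=
  ComplexEmbedding.isReal_iff.mpr <| RingHom.ext fun x => by
    simp [ComplexEmbedding.conjugate_coe_eq]

namespace InfinitePlace

noncomputable def ofRealEmbedding (σ : K →+* ℝ) : {w : InfinitePlace K // IsReal w} :=
  mkReal ⟨Complex.ofRealHom.comp σ, ComplexEmbedding.isReal_ofRealHom_comp σ⟩

theorem ofRealEmbedding_injective : Injective (ofRealEmbedding (K := K)) := fun σ τ h => by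
  have := congrArg Subtype.val (mkReal.injective h)
  ext x
  exact Complex.ofReal_injective (RingHom.congr_fun this x)

theorem ofRealEmbedding_apply (σ : K →+* ℝ) (x : K) :
    (ofRealEmbedding σ : InfinitePlace K) x = |σ x| := by
  simp [ofRealEmbedding, apply]

theorem embedding_of_isReal_ofRealEmbedding (σ : K →+* ℝ) :
    embedding_of_isReal (ofRealEmbedding σ).2 = σ := by
  ext x
  apply Complex.ofReal_injective
  simp [ofRealEmbedding, embedding_mk_eq_of_isReal (ComplexEmbedding.isReal_ofRealHom_comp σ)]

end InfinitePlace

variable [NumberField K]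

open scoped Classical in
theorem mixedEmbedding.exists_dist_le (x : mixedSpace K) :
    ∃ a : 𝓞 K, dist (mixedEmbedding K a) x ≤ ∑ i, ‖latticeBasis K i‖ := by
  obtain ⟨z, hz, hzx⟩ := ZSpan.exists_dist_le (latticeBasis K) x
  obtain ⟨a, rfl⟩ := (mem_span_latticeBasis K).mp hz
  exact ⟨a, hzx⟩

theorem exists_dist_realEmbeddings_le {ι : Type*} [Fintype ι] {σ : ι → K →+* ℝ}
    (hσ : Injective σ) : ∃ R, ∀ p : ι → ℝ, ∃ a : 𝓞 K, dist (fun i => σ i a) p ≤ R := by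
  classical
  refine ⟨∑ j, ‖latticeBasis K j‖, fun p => ?_⟩
  have hinj : Injective (ofRealEmbedding ∘ σ) := ofRealEmbedding_injective.comp hσ
  obtain ⟨a, ha⟩ := mixedEmbedding.exists_dist_le (K := K) (extend (ofRealEmbedding ∘ σ) p 0, 0)
  refine ⟨a, (dist_pi_le_iff (dist_nonneg.trans ha)).mpr fun i => ?_⟩
  calc dist (σ i a) (p i)
      = dist ((mixedEmbedding K a).1 (ofRealEmbedding (σ i)))
          (extend (ofRealEmbedding ∘ σ) p 0 (ofRealEmbedding (σ i))) := by
        rw [mixedEmbedding_apply_isReal, embedding_of_isReal_ofRealEmbedding]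
        exact congrArg _ (hinj.extend_apply p 0 i).symm
    _ ≤ dist (mixedEmbedding K a).1 (extend (ofRealEmbedding ∘ σ) p 0) := dist_le_pi_dist _ _ _
    _ ≤ _ := (le_max_left _ _).trans ha

theorem Units.exists_abs_lt_one (τ : K →+* ℝ) :
    ∃ u : (𝓞 K)ˣ, ∀ σ : K →+* ℝ, σ ≠ τ → |σ u| < 1 := by
  obtain ⟨u, hu⟩ := Units.dirichletUnitTheorem.exists_unit K (ofRealEmbedding τ)
  refine ⟨u, fun σ hστ => ?_⟩
  have hlog := hu _ fun h => hστ (ofRealEmbedding_injective (Subtype.ext h))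
  rw [ofRealEmbedding_apply] at hlog
  exact (Real.log_neg_iff (abs_pos.mpr (by simp))).mp hlog

theorem dense_range_realEmbeddings {ι : Type*} [Fintype ι] {σ : ι → K →+* ℝ} (hσ : Injective σ)
    {τ : K →+* ℝ} (hτ : ∀ i, σ i ≠ τ) : Dense (range fun (a : 𝓞 K) i => σ i a) := by
  obtain ⟨R, hR⟩ := exists_dist_realEmbeddings_le hσ
  obtain ⟨u, hu⟩ := Units.exists_abs_lt_one τ
  let ψ : 𝓞 K →+* (ι → ℝ) := RingHom.pi fun i => (σ i).comp (algebraMap (𝓞 K) K)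
  refine dense_of_forall_exists_dist_le_of_units_mul_mem (R := R)
    (fun p => (hR p).elim fun a ha => ⟨_, mem_range_self a, ha⟩) (Units.map ψ u) ?_ ?_
  · exact (pi_norm_lt_iff one_pos).mpr fun i => hu (σ i) (hτ i)
  · rintro _ ⟨a, rfl⟩
    exact ⟨u * a, map_mul ψ (u : 𝓞 K) a⟩

end NumberField

/-- For a totally real number field `K` of degree `n ≥ 2`, with real embeddings
`σ₁, …, σₙ`, the image of the ring of integers `𝓞_K` under `x ↦ (σ₂(x), …, σₙ(x))` is
dense in `ℝ^{n−1}`. -/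
theorem ring_of_integers_projection_dense (K : Type*) [Field K] [NumberField K]
    (n : ℕ) (hn : 2 ≤ n)
    (σ : Fin n → (K →+* ℝ)) (hinj : Function.Injective σ) :
    Dense (Set.range fun x : RingOfIntegers K =>
      fun i : Fin (n - 1) =>
        σ ⟨(i : ℕ) + 1, by have := i.isLt; omega⟩ (algebraMap (RingOfIntegers K) K x)) :=
  dense_range_realEmbeddings (τ := σ ⟨0, by omega⟩)
    (hinj.comp fun i j h => Fin.ext (by simpa using congrArg Fin.val h))
    fun i h => by simpa using congrArg Fin.val (hinj h)
end

section
/- Let K be a totally real number field of degree n over ℚ with real embeddings σ₁, …, σₙ : K → ℝ. For B = [[a,b],[c,d]] ∈ SL₂(K) and z ∈ ℍ, set Bᵢ·z := (σᵢ(a)·z + σᵢ(b))/(σᵢ(c)·z + σᵢ(d)) ∈ ℍ for i = 1, …, n. Then the set {(B₁·z, B₂·z, …, Bₙ·z) : B ∈ SL₂(K), z ∈ ℍ} (the union of the images of the diagonal Ξₙ = {(z, …, z) : z ∈ ℍ} under the elements of SL₂(K)) is dense in ℍⁿ. -/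
/-!
The upper triangular matrix `[[a, b], [0, a⁻¹]]` sends `i` to `a² i + a b`, and every point of `ℍ`
is `s² i + s u` with `s > 0`. By Dedekind's independence of characters the distinct embeddings
`σ₁, …, σₙ` span `ℝⁿ` over `ℝ`, so the image of `K`, a `ℚ`-subspace, is dense in `ℝⁿ`. Hence the
pairs `(σ(a), σ(b))` with `a` totally positive are dense in `(0, ∞)ⁿ × ℝⁿ`, and by continuity of
`(s, u) ↦ (s_k² i + s_k u_k)_k` the orbits of the diagonal are dense in `ℍⁿ`.
-/

open Complex Set

theorem span_range_ringHom_pi_eq_top {K ι : Type*} [Field K] [Fintype ι] (σ : ι → K →+* ℝ)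
    (hσ : Function.Injective σ) : Submodule.span ℝ (range (RingHom.pi σ)) = ⊤ := by
  classical
  rw [← Submodule.dualAnnihilator_eq_bot_iff]
  refine (Submodule.eq_bot_iff _).2 fun f hf => ?_
  -- A functional vanishing on the image of `K` is a linear relation among the `σ i`.
  have hrel : ∑ i, (f fun j => if i = j then 1 else 0) • (σ i : K → ℝ) = 0 := by
    funext x
    have hfx : f (RingHom.pi σ x) = 0 :=
      (Submodule.mem_dualAnnihilator f).1 hf _ (Submodule.subset_span ⟨x, rfl⟩)
    rw [f.pi_apply_eq_sum_univ] at hfx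
    simpa [Finset.sum_apply, mul_comm] using hfx
  have hDedekind := (linearIndependent_monoidHom K ℝ).comp (fun i => (σ i : K →* ℝ))
    fun i j hij => hσ (RingHom.ext fun x => DFunLike.congr_fun hij x)
  have hcoeff := Fintype.linearIndependent_iff.1 hDedekind _ hrel
  exact LinearMap.ext fun v => by simp [f.pi_apply_eq_sum_univ v, hcoeff]

theorem Submodule.dense_of_span_real_eq_top {E : Type*} [AddCommGroup E] [Module ℝ E]
    [Module ℚ E] [TopologicalSpace E] [IsTopologicalAddGroup E] [ContinuousSMul ℝ E]
    (W : Submodule ℚ E) (hW : Submodule.span ℝ (W : Set E) = ⊤) : Dense (W : Set E) := by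
  have hsmul (r : ℝ) {v : E} (hv : v ∈ closure (W : Set E)) : r • v ∈ closure (W : Set E) := by
    refine closure_mono ?_ <| smul_set_closure_subset _ _ <|
      Set.smul_mem_smul (Rat.denseRange_cast r) hv
    rintro _ ⟨_, ⟨q, rfl⟩, w, hw, rfl⟩
    simpa [ratCast_smul_eq ℝ ℚ] using W.smul_mem q hw
  let T : Submodule ℝ E := { W.toAddSubgroup.topologicalClosure with smul_mem' := hsmul }
  have hT : T = ⊤ := top_le_iff.1 (hW ▸ Submodule.span_le.2 subset_closure)
  exact fun v => (hT ▸ Submodule.mem_top : v ∈ T)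

theorem denseRange_ringHom_pi {K ι : Type*} [Field K] [CharZero K] [Fintype ι] (σ : ι → K →+* ℝ)
    (hσ : Function.Injective σ) : DenseRange (RingHom.pi σ) := by
  have hW := Submodule.dense_of_span_real_eq_top
    (LinearMap.range (RingHom.pi σ).toRatAlgHom.toLinearMap)
  rw [LinearMap.coe_range] at hW
  exact hW (span_range_ringHom_pi_eq_top σ hσ)

theorem moebius_upperTriangular_apply_I {K : Type*} [Field K] (φ : K →+* ℝ) {a : K} (ha : a ≠ 0)
    (b : K) : ((φ a : ℂ) * I + φ b) / ((φ 0 : ℂ) * I + φ a⁻¹) = (φ a : ℂ) ^ 2 * I + φ a * φ b := by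
  have hφa : (φ a : ℂ) ≠ 0 := ofReal_ne_zero.2 ((map_ne_zero φ).2 ha)
  rw [map_zero, map_inv₀]
  push_cast
  field_simp
  ring

theorem Complex.eq_sqrt_im_sq_mul_I_add {w : ℂ} (hw : 0 < w.im) :
    w = (√w.im : ℂ) ^ 2 * I + √w.im * (w.re / √w.im : ℝ) := by
  have hs : √w.im ≠ 0 := (Real.sqrt_pos.2 hw).ne'
  push_cast
  rw [mul_div_cancel₀ _ (ofReal_ne_zero.2 hs), ← ofReal_pow, Real.sq_sqrt hw.le]
  apply Complex.ext <;> simp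

theorem diagonal_orbits_dense_general (K : Type*) [Field K] [NumberField K]
    (n : ℕ) (hdeg : Module.finrank ℚ K = n)
    (σ : Fin n → (K →+* ℝ)) (hinj : Function.Injective σ) :
    ∀ w : Fin n → ℂ, (∀ i, 0 < (w i).im) →
      w ∈ closure {v : Fin n → ℂ | ∃ (a b c d : K) (z : ℂ),
        a * d - b * c = 1 ∧ 0 < z.im ∧
        ∀ i, v i = ((σ i a : ℂ) * z + (σ i b : ℂ)) / ((σ i c : ℂ) * z + (σ i d : ℂ))} := by
  intro w hw
  let F : (Fin n → ℝ) × (Fin n → ℝ) → Fin n → ℂ := fun p i => (p.1 i : ℂ) ^ 2 * I + p.1 i * p.2 i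
  let R := range (RingHom.pi σ)
  have hR : Dense R := denseRange_ringHom_pi σ hinj
  have hwF : F (fun i => √(w i).im, fun i => (w i).re / √(w i).im) = w :=
    funext fun i => (eq_sqrt_im_sq_mul_I_add (hw i)).symm
  have hmem : (fun i => √(w i).im, fun i => (w i).re / √(w i).im) ∈
      closure ((univ.pi (fun _ => Ioi 0) ∩ R) ×ˢ R) := by
    rw [closure_prod_eq]
    exact ⟨hR.open_subset_closure_inter (isOpen_set_pi finite_univ fun _ _ => isOpen_Ioi)
      fun i _ => Real.sqrt_pos.2 (hw i), hR _⟩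
  refine hwF ▸ map_mem_closure (by fun_prop) hmem ?_
  rintro ⟨_, _⟩ ⟨⟨hpos, a, rfl⟩, b, rfl⟩
  have ha : a ≠ 0 := fun h => by
    simpa [h] using hpos ⟨0, hdeg ▸ Module.finrank_pos⟩ trivial
  exact ⟨a, b, 0, a⁻¹, I, by simp [ha], by simp,
    fun i => (moebius_upperTriangular_apply_I (σ i) ha b).symm⟩

/-- For a totally real number field `K` of degree `n` with real embeddings `σ₁, …, σₙ`,
the union over `B ∈ SL₂(K)` of the images of the diagonal `Ξₙ = {(z, …, z)}` under the
componentwise Möbius actions `(B₁·z, …, Bₙ·z)` is dense in `ℍⁿ`. -/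
theorem diagonal_orbits_dense (K : Type*) [Field K] [NumberField K]
    (n : ℕ) (hdeg : Module.finrank ℚ K = n)
    (σ : Fin n → (K →+* ℝ)) (hinj : Function.Injective σ)
    (hall : ∀ τ : K →+* ℝ, ∃ i, σ i = τ)
    (htotallyReal : ∀ φ : K →+* ℂ, ∀ x : K, (φ x).im = 0) :
    ∀ w : Fin n → ℂ, (∀ i, 0 < (w i).im) →
      w ∈ closure {v : Fin n → ℂ | ∃ (a b c d : K) (z : ℂ),
        a * d - b * c = 1 ∧ 0 < z.im ∧
        ∀ i, v i = ((σ i a : ℂ) * z + (σ i b : ℂ)) / ((σ i c : ℂ) * z + (σ i d : ℂ))} :=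
  diagonal_orbits_dense_general K n hdeg σ hinj
end
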